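/- Let $\mathbf{z}\in\mathbb{R}^C$ be sorted descendingly, $T > 1$, and $\Delta z = z_1 - z_2$. Then $0 < d(\mathbf{z};T,1) < \frac{(C-1)e^{-\Delta z/T}}{(C-1)e^{-\Delta z/T}+1}$, where $d(\mathbf{z};T,1) = \frac{e^{z_1}}{\sum_j e^{z_j}} - \frac{e^{z_1/T}}{\sum_j e^{z_j/T}}$, and provided not all entries of $\mathbf{z}$ are equal so that the lower bound is strict. -/

import Mathlib

/-!
Write `p_T = e^{z₁/T} / Σⱼ e^{zⱼ/T}`. Cross-multiplying, `p_T < p_1` becomes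
`Σⱼ e^{z₁/T + zⱼ} < Σⱼ e^{z₁ + zⱼ/T}`, which holds termwise because `x - x/T` is increasing,
strictly at any `zⱼ < z₁`. For the upper bound, `d < 1 - p_T`, and `1 - p_T = S / (e^{z₁/T} + S)`
with `S = Σ_{j ≥ 2} e^{zⱼ/T} ≤ (C - 1) e^{z₂/T}`; this expression is increasing in `S`.
-/

noncomputable def dfun {C : ℕ} (z : Fin C → ℝ) (T : ℝ) (i : Fin C) : ℝ :=
  Real.exp (z i) / (∑ j, Real.exp (z j)) - Real.exp (z i / T) / (∑ j, Real.exp (z j / T))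

open Finset Real

noncomputable def softmax {ι : Type*} [Fintype ι] (z : ι → ℝ) (i : ι) : ℝ :=
  exp (z i) / ∑ j, exp (z j)

section

variable {ι : Type*} [Fintype ι]

lemma sum_exp_pos [Nonempty ι] (z : ι → ℝ) : 0 < ∑ j, exp (z j) :=
  Finset.sum_pos (fun j _ => exp_pos (z j)) univ_nonempty

lemma softmax_lt_one [Nontrivial ι] (z : ι → ℝ) (i : ι) : softmax z i < 1 := by
  obtain ⟨j, hji⟩ := exists_ne i
  rw [softmax, div_lt_one (sum_exp_pos z)]
  exact single_lt_sum hji (mem_univ i) (mem_univ j) (exp_pos _)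
    (fun k _ _ => (exp_pos _).le)

lemma softmax_div_lt_softmax {z : ι → ℝ} {i k : ι} (hmax : ∀ j, z j ≤ z i) (hk : z k < z i)
    {T : ℝ} (hT : 1 < T) : softmax (fun j => z j / T) i < softmax z i := by
  have : Nonempty ι := ⟨i⟩
  rw [softmax, softmax, div_lt_div_iff₀ (sum_exp_pos _) (sum_exp_pos _), mul_sum, mul_sum]
  simp only [← exp_add]
  refine sum_lt_sum (fun j _ => exp_le_exp.2 ?_) ⟨k, mem_univ k, exp_lt_exp.2 ?_⟩
  · have := div_le_self (sub_nonneg.2 (hmax j)) hT.le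
    rw [sub_div] at this
    linarith
  · have := div_lt_self (sub_pos.2 hk) hT
    rw [sub_div] at this
    linarith

lemma one_sub_softmax_le [DecidableEq ι] {z : ι → ℝ} {i : ι} {w : ℝ} (hw : ∀ j ≠ i, z j ≤ w) :
    1 - softmax z i ≤
      ((Fintype.card ι : ℝ) - 1) * exp (w - z i) /
        (((Fintype.card ι : ℝ) - 1) * exp (w - z i) + 1) := by
  have : Nonempty ι := ⟨i⟩
  set S := ∑ j ∈ univ.erase i, exp (z j)
  set N : ℝ := (Fintype.card ι : ℝ) - 1
  have hS : S ≤ N * exp w := by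
    have := sum_le_card_nsmul (univ.erase i) (fun j => exp (z j)) (exp w)
      (fun j hj => exp_le_exp.2 (hw j (ne_of_mem_erase hj)))
    rwa [card_erase_of_mem (mem_univ i), card_univ, nsmul_eq_mul, Nat.cast_sub Fintype.card_pos,
      Nat.cast_one] at this
  have hsplit : ∑ j, exp (z j) = exp (z i) + S := (add_sum_erase _ _ (mem_univ i)).symm
  have hN : 0 ≤ N := sub_nonneg.2 (Nat.one_le_cast.2 Fintype.card_pos)
  have hSpos : 0 ≤ S := sum_nonneg fun j _ => (exp_pos _).le
  have hexp : exp w = exp (w - z i) * exp (z i) := by rw [← exp_add, sub_add_cancel]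
  rw [softmax, hsplit, one_sub_div (by positivity), add_sub_cancel_left,
    div_le_div_iff₀ (by positivity) (by positivity)]
  rw [hexp] at hS
  nlinarith [exp_pos (z i), exp_pos (w - z i)]

end

theorem stmt_18 {C : ℕ} (hC : 2 ≤ C) (z : Fin C → ℝ)
    (hz : ∀ i j : Fin C, i ≤ j → z j ≤ z i)
    (T : ℝ) (hT : 1 < T) (hne : ∃ i j : Fin C, z i ≠ z j) :
    0 < dfun z T ⟨0, by omega⟩ ∧
      dfun z T ⟨0, by omega⟩ <
        ((C : ℝ) - 1) * Real.exp (-(z ⟨0, by omega⟩ - z ⟨1, by omega⟩) / T) /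
          (((C : ℝ) - 1) * Real.exp (-(z ⟨0, by omega⟩ - z ⟨1, by omega⟩) / T) + 1) := by
  have : Nontrivial (Fin C) := Fin.nontrivial_iff_two_le.2 hC
  have hd : dfun z T ⟨0, by omega⟩ =
      softmax z ⟨0, by omega⟩ - softmax (fun j => z j / T) ⟨0, by omega⟩ := rfl
  have hmax : ∀ j, z j ≤ z ⟨0, by omega⟩ := fun j => hz _ j (Nat.zero_le _)
  obtain ⟨k, hk⟩ : ∃ k, z k < z ⟨0, by omega⟩ := by
    obtain ⟨i, j, hij⟩ := hne
    by_contra! h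
    exact hij ((le_antisymm (hmax i) (h i)).trans (le_antisymm (hmax j) (h j)).symm)
  have hsecond : ∀ j ≠ (⟨0, by omega⟩ : Fin C), z j / T ≤ z ⟨1, by omega⟩ / T := fun j hj =>
    div_le_div_of_nonneg_right (hz _ j (Nat.one_le_iff_ne_zero.2 fun h => hj (Fin.ext h)))
      (by linarith)
  have hupper := one_sub_softmax_le hsecond
  rw [Fintype.card_fin] at hupper
  rw [hd, neg_sub, sub_div]
  constructor
  · exact sub_pos.2 (softmax_div_lt_softmax hmax hk hT)
  · linarith [softmax_lt_one z ⟨0, by omega⟩]
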